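/- For every finite simple graph G and nonnegative reals λ and α, the generalized independence polynomial satisfies Z_G(λ; α) ≥ ∏_{v ∈ V(G)} ((d_v+1)λα^{d_v} + 1)^{1/(d_v+1)}, where d_v is the degree of v. -/

import Mathlib

/-!
With `μ v = λ α ^ d_v`, an independent set `I` has exactly `∑_{v ∈ I} d_v` boundary edges, so
`Z_G(λ; α) = ∑_I ∏_{v ∈ I} μ v`, and it suffices to prove
`∑_I ∏_{v ∈ I} μ v ≥ ∏_v ((d_v + 1) μ v + 1) ^ (1 / (d_v + 1))` for all weights `μ ≥ 0`.

Induct on the number of edges. Let `v` have maximum degree `d` and delete its edges. Splitting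
according to whether `v ∈ I` bounds the left side below by the two induction hypotheses, and what
remains is the local inequality `((d + 1) s + 1) ^ (1 / (d + 1)) ∏_{u ∼ v} b_u ≤ ∏_{u ∼ v} a_u + s`,
where `a_u`, `b_u` are the factors of the neighbour `u` after and before its degree drops by one.
Weighted AM-GM in `s` reduces this to `d (∏ b_u ^ (d + 1)) ^ (1 / d) + 1 ≤ (d + 1) ∏ a_u`, which
follows from the superadditivity of the geometric mean once `d b_u ^ (d + 1) + 1 ≤ (d + 1) a_u ^ d`.
The latter is an equality for `d = d_u` and persists as `d` grows (a one-variable calculus fact);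
here maximality of `d` is used.
-/

open Finset

lemma succ_mul_pow_le (k : ℕ) {x : ℝ} (hx : 0 ≤ x) :
    ((k : ℝ) + 1) * x ^ k ≤ k * x ^ (k + 1) + 1 := by
  induction k with
  | zero => simp
  | succ k ih =>
    have hsign : 0 ≤ (x - 1) * (x ^ (k + 1) - 1) := by
      rcases le_total x 1 with h | h
      · exact mul_nonneg_of_nonpos_of_nonpos (by linarith)
          (by linarith [pow_le_one₀ hx h (n := k + 1)])
      · exact mul_nonneg (by linarith) (by linarith [one_le_pow₀ h (n := k + 1)])
    have hx_ih := mul_le_mul_of_nonneg_left ih hx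
    push_cast
    ring_nf at hsign hx_ih ⊢
    linarith

lemma rpow_inv_succ_le {k : ℕ} (hk : 1 ≤ k) {x : ℝ} (hx : 1 ≤ x) :
    (((k + 1) * x ^ k - 1) / k) ^ ((k : ℝ) + 1)⁻¹ ≤ x := by
  have hk0 : (0 : ℝ) < k := by exact_mod_cast hk
  have hΦ0 : 0 ≤ ((k + 1) * x ^ k - 1) / k := by
    rw [le_div_iff₀ hk0]; nlinarith [one_le_pow₀ hx (n := k)]
  have hΦ : ((k + 1) * x ^ k - 1) / k ≤ x ^ (k + 1) := by
    rw [div_le_iff₀ hk0]; linarith [succ_mul_pow_le k (x := x) (by linarith)]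
  calc (((k + 1) * x ^ k - 1) / k) ^ ((k : ℝ) + 1)⁻¹
      ≤ (x ^ (k + 1)) ^ ((k + 1 : ℕ) : ℝ)⁻¹ := by
        push_cast
        exact Real.rpow_le_rpow hΦ0 hΦ (by positivity)
    _ = x := Real.pow_rpow_inv_natCast (by linarith) (by omega)

lemma succ_mul_rpow_add_one_le {k : ℕ} (hk : 1 ≤ k) {x : ℝ} (hx : 1 ≤ x) :
    ((k : ℝ) + 1) * (((k + 1) * x ^ k - 1) / k) ^ (((k : ℝ) + 2) / (k + 1)) + 1
      ≤ (k + 2) * x ^ (k + 1) := by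
  have hk0 : (0 : ℝ) < k := by exact_mod_cast hk
  set p : ℝ := ((k : ℝ) + 2) / (k + 1) with hp_def
  have hp1 : 1 ≤ p := by rw [hp_def, le_div_iff₀ (by positivity)]; linarith
  have hp : p - 1 = ((k : ℝ) + 1)⁻¹ := by rw [hp_def]; field_simp; ring
  set Φ : ℝ → ℝ := fun x => ((k + 1) * x ^ k - 1) / k
  set f : ℝ → ℝ := fun x => (k + 2) * x ^ (k + 1) - (k + 1) * Φ x ^ p
  have hf : ∀ y, HasDerivAt f ((k + 2) * ((k + 1 : ℕ) * y ^ k)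
      - (k + 1) * ((k + 1) * (k * y ^ (k - 1)) / k * p * Φ y ^ (p - 1))) y := by
    intro y
    have hΦ : HasDerivAt Φ ((k + 1) * (k * y ^ (k - 1)) / k) y :=
      (((hasDerivAt_pow k y).const_mul _).sub_const 1).div_const _
    exact ((hasDerivAt_pow (k + 1) y).const_mul _).sub ((hΦ.rpow_const (Or.inr hp1)).const_mul _)
  -- `f' y = (k + 1) (k + 2) y ^ (k - 1) (y - Φ y ^ (1 / (k + 1)))`
  have hmono : MonotoneOn f (Set.Ici 1) := by
    refine monotoneOn_of_deriv_nonneg (convex_Ici 1)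
      (fun y _ => (hf y).continuousAt.continuousWithinAt)
      (fun y _ => (hf y).differentiableAt.differentiableWithinAt) fun y hy => ?_
    rw [interior_Ici, Set.mem_Ioi] at hy
    have hcoef : (k + 1) * (k * y ^ (k - 1)) / k * p = (k + 2) * y ^ (k - 1) := by
      rw [hp_def]; field_simp
    have hle : (k + 2) * y ^ (k - 1) * Φ y ^ (p - 1) ≤ (k + 2) * y ^ k := by
      rw [← pow_sub_one_mul (by omega : k ≠ 0) y, ← mul_assoc, hp]
      exact mul_le_mul_of_nonneg_left (rpow_inv_succ_le hk hy.le) (by positivity)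
    rw [(hf y).deriv, hcoef]
    push_cast
    nlinarith
  have hf1 : f 1 = 1 := by simp [f, Φ, hk0.ne']; ring
  have := hmono (Set.mem_Ici.2 le_rfl) (Set.mem_Ici.2 hx) hx
  simp only [hf1, f] at this
  linarith

lemma mul_pow_add_one_le_succ {k : ℕ} (hk : 1 ≤ k) {x y : ℝ} (hx : 1 ≤ x) (hy : 0 ≤ y)
    (h : (k : ℝ) * y ^ (k + 1) + 1 ≤ (k + 1) * x ^ k) :
    ((k : ℝ) + 1) * y ^ (k + 2) + 1 ≤ (k + 2) * x ^ (k + 1) := by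
  have hk0 : (0 : ℝ) < k := by exact_mod_cast hk
  have hyΦ : y ^ (k + 1) ≤ ((k + 1) * x ^ k - 1) / k := by rw [le_div_iff₀ hk0]; linarith
  have hpow : y ^ (k + 2) = (y ^ (k + 1)) ^ (((k : ℝ) + 2) / (k + 1)) := by
    rw [← Real.rpow_natCast y (k + 1), ← Real.rpow_mul hy, ← Real.rpow_natCast]
    congr 1; push_cast; field_simp
  have hle := Real.rpow_le_rpow (pow_nonneg hy _) hyΦ
    (by positivity : (0 : ℝ) ≤ ((k : ℝ) + 2) / (k + 1))
  rw [← hpow] at hle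
  linarith [mul_le_mul_of_nonneg_left hle (by positivity : (0 : ℝ) ≤ k + 1),
    succ_mul_rpow_add_one_le hk hx]

lemma mul_pow_add_one_le_of_le {k l : ℕ} (hk : 1 ≤ k) (hkl : k ≤ l) {x y : ℝ} (hx : 1 ≤ x)
    (hy : 0 ≤ y) (h : (k : ℝ) * y ^ (k + 1) + 1 ≤ (k + 1) * x ^ k) :
    (l : ℝ) * y ^ (l + 1) + 1 ≤ (l + 1) * x ^ l := by
  induction l, hkl using Nat.le_induction with
  | base => exact h
  | succ l hkl ih =>
    push_cast
    linarith [mul_pow_add_one_le_succ (hk.trans hkl) hx hy ih]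

lemma prod_rpow_add_prod_rpow_le {ι : Type*} {s : Finset ι} (hs : s.Nonempty) {x y : ι → ℝ}
    (hx : ∀ i ∈ s, 0 ≤ x i) (hy : ∀ i ∈ s, 0 ≤ y i) :
    (∏ i ∈ s, x i) ^ ((#s : ℝ)⁻¹) + (∏ i ∈ s, y i) ^ ((#s : ℝ)⁻¹)
      ≤ (∏ i ∈ s, (x i + y i)) ^ ((#s : ℝ)⁻¹) := by
  set w : ℝ := (#s : ℝ)⁻¹
  have hw : 0 ≤ w := by positivity
  have hw1 : ∑ _i ∈ s, w = 1 := by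
    rw [sum_const, nsmul_eq_mul]; exact mul_inv_cancel₀ (by exact_mod_cast hs.card_pos.ne')
  have hxy : ∀ i ∈ s, 0 ≤ x i + y i := fun i hi => add_nonneg (hx i hi) (hy i hi)
  -- `0 / 0 = 0` makes the rescaling valid also where `x i + y i = 0`
  have hrescale : ∀ z : ι → ℝ, (∀ i ∈ s, 0 ≤ z i) → (∀ i ∈ s, z i ≤ x i + y i) →
      (∏ i ∈ s, z i) ^ w
        = (∏ i ∈ s, (x i + y i)) ^ w * ∏ i ∈ s, (z i / (x i + y i)) ^ w := by
    intro z hz hzS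
    rw [← Real.finsetProd_rpow _ _ hz, ← Real.finsetProd_rpow _ _ hxy, ← prod_mul_distrib]
    refine prod_congr rfl fun i hi => ?_
    rw [← Real.mul_rpow (hxy i hi) (div_nonneg (hz i hi) (hxy i hi))]
    rcases eq_or_ne (x i + y i) 0 with h0 | h0
    · rw [h0, zero_mul, le_antisymm (h0 ▸ hzS i hi) (hz i hi)]
    · rw [mul_div_cancel₀ _ h0]
  have hamgm : ∀ z : ι → ℝ, (∀ i ∈ s, 0 ≤ z i) →
      ∏ i ∈ s, (z i / (x i + y i)) ^ w ≤ ∑ i ∈ s, w * (z i / (x i + y i)) := fun z hz =>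
    Real.geom_mean_le_arith_mean_weighted s _ _ (fun _ _ => hw) hw1
      fun i hi => div_nonneg (hz i hi) (hxy i hi)
  have hmean : ∑ i ∈ s, w * (x i / (x i + y i)) + ∑ i ∈ s, w * (y i / (x i + y i)) ≤ 1 := by
    rw [← sum_add_distrib, ← hw1]
    refine sum_le_sum fun i _ => ?_
    rw [← mul_add, ← add_div]
    exact mul_le_of_le_one_right hw (div_self_le_one _)
  have hS : 0 ≤ (∏ i ∈ s, (x i + y i)) ^ w := Real.rpow_nonneg (prod_nonneg hxy) _
  rw [hrescale x hx (fun i hi => le_add_of_nonneg_right (hy i hi)),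
    hrescale y hy (fun i hi => le_add_of_nonneg_left (hx i hi))]
  nlinarith [hamgm x hx, hamgm y hy]

lemma card_mul_prod_rpow_add_one_le {ι : Type*} {s : Finset ι} (hs : s.Nonempty) {a b : ι → ℝ}
    (ha : ∀ i ∈ s, 0 ≤ a i) (hb : ∀ i ∈ s, 0 ≤ b i)
    (hab : ∀ i ∈ s, (#s : ℝ) * b i ^ (#s + 1) + 1 ≤ (#s + 1) * a i ^ #s) :
    (#s : ℝ) * (∏ i ∈ s, b i ^ (#s + 1)) ^ ((#s : ℝ)⁻¹) + 1 ≤ (#s + 1) * ∏ i ∈ s, a i := by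
  have hn : #s ≠ 0 := hs.card_pos.ne'
  have hroot : ∀ {z : ℝ}, 0 ≤ z → (z ^ #s) ^ ((#s : ℝ)⁻¹) = z := fun hz =>
    Real.pow_rpow_inv_natCast hz hn
  calc (#s : ℝ) * (∏ i ∈ s, b i ^ (#s + 1)) ^ ((#s : ℝ)⁻¹) + 1
      = (∏ i ∈ s, ((#s : ℝ) * b i ^ (#s + 1))) ^ ((#s : ℝ)⁻¹)
          + (∏ _i ∈ s, (1 : ℝ)) ^ ((#s : ℝ)⁻¹) := by
        rw [prod_mul_distrib, prod_const, Real.mul_rpow (by positivity)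
          (prod_nonneg fun i hi => pow_nonneg (hb i hi) _), hroot (Nat.cast_nonneg _),
          prod_const_one, Real.one_rpow]
    _ ≤ (∏ i ∈ s, ((#s : ℝ) * b i ^ (#s + 1) + 1)) ^ ((#s : ℝ)⁻¹) :=
        prod_rpow_add_prod_rpow_le hs
          (fun i hi => mul_nonneg (Nat.cast_nonneg _) (pow_nonneg (hb i hi) _))
          fun _ _ => zero_le_one
    _ ≤ (∏ i ∈ s, ((#s + 1) * a i ^ #s)) ^ ((#s : ℝ)⁻¹) := by
        refine Real.rpow_le_rpow (prod_nonneg fun i hi => ?_) (prod_le_prod (fun i hi => ?_) hab)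
          (by positivity) <;> · have := hb i hi; positivity
    _ = (#s + 1) * ∏ i ∈ s, a i := by
        rw [prod_mul_distrib, prod_const, prod_pow, ← mul_pow,
          hroot (mul_nonneg (by positivity) (prod_nonneg ha))]

noncomputable def degFactor (d : ℕ) (x : ℝ) : ℝ :=
  (((d : ℝ) + 1) * x + 1) ^ ((1 : ℝ) / ((d : ℝ) + 1))

lemma one_le_degFactor (d : ℕ) {x : ℝ} (hx : 0 ≤ x) : 1 ≤ degFactor d x :=
  Real.one_le_rpow (by nlinarith [(Nat.cast_nonneg d : (0 : ℝ) ≤ d)]) (by positivity)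

lemma degFactor_pow (d : ℕ) {x : ℝ} (hx : 0 ≤ x) :
    degFactor d x ^ (d + 1) = ((d : ℝ) + 1) * x + 1 := by
  rw [degFactor, one_div, ← Nat.cast_add_one]
  exact Real.rpow_inv_natCast_pow (by positivity) (Nat.succ_ne_zero d)

@[simp] lemma degFactor_zero_left (x : ℝ) : degFactor 0 x = x + 1 := by simp [degFactor]

@[simp] lemma degFactor_zero_right (d : ℕ) : degFactor d 0 = 1 := by simp [degFactor]

lemma degFactor_mul_prod_le {ι : Type*} {N : Finset ι} (hN : N.Nonempty) {m : ι → ℕ}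
    (hm : ∀ u ∈ N, m u < #N) {t : ι → ℝ} (ht : ∀ u ∈ N, 0 ≤ t u) {s : ℝ} (hs : 0 ≤ s) :
    degFactor #N s * ∏ u ∈ N, degFactor (m u + 1) (t u)
      ≤ ∏ u ∈ N, degFactor (m u) (t u) + s := by
  set n := #N
  have hn : (0 : ℝ) < n := by exact_mod_cast hN.card_pos
  have hb : ∀ u ∈ N, 0 ≤ degFactor (m u + 1) (t u) := fun u hu =>
    zero_le_one.trans (one_le_degFactor _ (ht u hu))
  have hchain : ∀ u ∈ N, (n : ℝ) * degFactor (m u + 1) (t u) ^ (n + 1) + 1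
      ≤ (n + 1) * degFactor (m u) (t u) ^ n := by
    intro u hu
    refine mul_pow_add_one_le_of_le (k := m u + 1) le_add_self (hm u hu)
      (one_le_degFactor _ (ht u hu)) (hb u hu) (le_of_eq ?_)
    rw [degFactor_pow _ (ht u hu), degFactor_pow _ (ht u hu)]
    push_cast; ring
  set R := (∏ u ∈ N, degFactor (m u + 1) (t u) ^ (n + 1)) ^ ((n : ℝ)⁻¹)
  have hR : 0 ≤ R := Real.rpow_nonneg (prod_nonneg fun u hu => pow_nonneg (hb u hu) _) _
  have hQ : ∏ u ∈ N, degFactor (m u + 1) (t u) = R ^ ((n : ℝ) / (n + 1)) := by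
    rw [← Real.rpow_mul (prod_nonneg fun u hu => pow_nonneg (hb u hu) _), prod_pow,
      show (n : ℝ)⁻¹ * (n / (n + 1)) = ((n + 1 : ℕ) : ℝ)⁻¹ by push_cast; field_simp,
      Real.pow_rpow_inv_natCast (prod_nonneg hb) (Nat.succ_ne_zero n)]
  have hamgm := Real.geom_mean_le_arith_mean2_weighted (w₁ := ((n : ℝ) + 1)⁻¹)
    (w₂ := (n : ℝ) / (n + 1)) (p₁ := (n + 1) * s + 1) (p₂ := R) (by positivity) (by positivity)
    (by positivity) hR (by field_simp; ring)
  have hB := card_mul_prod_rpow_add_one_le hN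
    (fun u hu => zero_le_one.trans (one_le_degFactor _ (ht u hu))) hb hchain
  rw [degFactor, hQ, one_div]
  calc (((n : ℝ) + 1) * s + 1) ^ ((n : ℝ) + 1)⁻¹ * R ^ ((n : ℝ) / (n + 1))
      ≤ ((n : ℝ) + 1)⁻¹ * ((n + 1) * s + 1) + n / (n + 1) * R := hamgm
    _ = s + (n * R + 1) / (n + 1) := by field_simp; ring
    _ ≤ s + ((n + 1) * ∏ u ∈ N, degFactor (m u) (t u)) / (n + 1) := by gcongr
    _ = _ := by field_simp; ring

namespace SimpleGraph

lemma forall_not_adj_deleteIncidenceSet_iff {V : Type*} {G : SimpleGraph V} {v : V}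
    {J : Finset V} (hv : v ∉ J) :
    (∀ u ∈ J, ∀ w ∈ J, ¬ (G.deleteIncidenceSet v).Adj u w) ↔ ∀ u ∈ J, ∀ w ∈ J, ¬ G.Adj u w := by
  simp only [deleteIncidenceSet_adj, not_and]
  exact forall₄_congr fun u hu w hw => ⟨fun h hadj => h hadj (ne_of_mem_of_not_mem hu hv)
    (ne_of_mem_of_not_mem hw hv), fun h hadj => absurd hadj h⟩

section Weighted

variable {V : Type*} [Fintype V] [DecidableEq V] (G : SimpleGraph V) [DecidableRel G.Adj]

def indepFinsets : Finset (Finset V) :=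
  univ.filter fun I => ∀ u ∈ I, ∀ w ∈ I, ¬ G.Adj u w

noncomputable def indepPoly (μ : V → ℝ) : ℝ :=
  ∑ I ∈ G.indepFinsets, ∏ u ∈ I, μ u

noncomputable def indepWeight (μ : V → ℝ) (I : Finset V) : ℝ :=
  if ∀ u ∈ I, ∀ w ∈ I, ¬ G.Adj u w then ∏ u ∈ I, μ u else 0

variable {G}

lemma indepPoly_eq_sum_indepWeight (μ : V → ℝ) : G.indepPoly μ = ∑ I, G.indepWeight μ I :=
  sum_filter _ _

lemma indepWeight_eq_zero {μ : V → ℝ} {I : Finset V} {u : V} (hu : u ∈ I) (h : μ u = 0) :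
    G.indepWeight μ I = 0 := by
  rw [indepWeight, prod_eq_zero hu h, ite_self]

lemma indepWeight_deleteIncidenceSet_update {v : V} {J : Finset V} (hv : v ∉ J) (μ : V → ℝ) :
    (G.deleteIncidenceSet v).indepWeight (Function.update μ v 0) J = G.indepWeight μ J := by
  simp only [indepWeight, forall_not_adj_deleteIncidenceSet_iff hv,
    prod_congr rfl fun u hu => Function.update_of_ne (ne_of_mem_of_not_mem hu hv) 0 μ]

lemma indepWeight_insert {v : V} {J : Finset V} (hv : v ∉ J) (μ : V → ℝ) :
    G.indepWeight μ (insert v J)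
      = μ v * (G.deleteIncidenceSet v).indepWeight
          (fun u => if u = v ∨ G.Adj v u then 0 else μ u) J := by
  by_cases hN : ∃ u ∈ J, G.Adj v u
  · obtain ⟨u, hu, hvu⟩ := hN
    rw [indepWeight_eq_zero hu (if_pos (Or.inr hvu)), mul_zero, indepWeight, if_neg]
    exact fun h => h v (mem_insert_self v J) u (mem_insert_of_mem hu) hvu
  push Not at hN
  have hindep : (∀ u ∈ insert v J, ∀ w ∈ insert v J, ¬ G.Adj u w)
      ↔ ∀ u ∈ J, ∀ w ∈ J, ¬ G.Adj u w := by
    simp only [forall_mem_insert, G.loopless.irrefl v, not_false_eq_true, true_and]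
    exact ⟨fun h u hu => (h.2 u hu).2,
      fun h => ⟨hN, fun u hu => ⟨fun hvu => hN u hu hvu.symm, h u hu⟩⟩⟩
  simp only [indepWeight, hindep, forall_not_adj_deleteIncidenceSet_iff hv, prod_insert hv,
    prod_congr rfl fun u hu => if_neg (not_or.2 ⟨ne_of_mem_of_not_mem hu hv, hN u hu⟩), mul_ite,
    mul_zero]

/-- Removing `v`, resp. its closed neighbourhood, is modelled by giving those vertices weight `0`,
so that all graphs live on the same vertex type. -/
lemma indepPoly_eq_add_mul (v : V) (μ : V → ℝ) :
    G.indepPoly μ = (G.deleteIncidenceSet v).indepPoly (Function.update μ v 0)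
      + μ v * (G.deleteIncidenceSet v).indepPoly
          (fun u => if u = v ∨ G.Adj v u then 0 else μ u) := by
  have hsplit : ∀ f : Finset V → ℝ,
      ∑ I, f I = ∑ J ∈ (univ.erase v).powerset, (f J + f (insert v J)) := fun f => by
    rw [sum_add_distrib, ← sum_powerset_insert (notMem_erase v univ), insert_erase (mem_univ v),
      powerset_univ]
  simp only [indepPoly_eq_sum_indepWeight, hsplit, mul_sum, ← sum_add_distrib]
  refine sum_congr rfl fun J hJ => ?_
  have hv : v ∉ J := fun h => notMem_erase v univ (mem_powerset.1 hJ h)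
  rw [indepWeight_deleteIncidenceSet_update hv, indepWeight_insert hv,
    indepWeight_eq_zero (mem_insert_self v J) (Function.update_self v 0 μ),
    indepWeight_eq_zero (mem_insert_self v J) (if_pos (Or.inl rfl)), add_zero, add_zero]

lemma card_boundary_eq_sum_degree {I : Finset V} (hI : ∀ u ∈ I, ∀ w ∈ I, ¬ G.Adj u w) :
    #(G.edgeFinset.filter fun e => ∃ u w, e = s(u, w) ∧ u ∈ I ∧ w ∉ I)
      = ∑ u ∈ I, G.degree u := by
  have hbiUnion : G.edgeFinset.filter (fun e => ∃ u w, e = s(u, w) ∧ u ∈ I ∧ w ∉ I)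
      = I.biUnion fun u => G.incidenceFinset u := by
    ext e
    simp only [mem_filter, mem_biUnion, mem_incidenceFinset, mem_edgeFinset, incidenceSet,
      Set.mem_ofPred_eq]
    constructor
    · rintro ⟨he, u, w, rfl, hu, -⟩
      exact ⟨u, hu, he, Sym2.mem_mk_left u w⟩
    · rintro ⟨u, hu, he, hue⟩
      rw [← Sym2.other_spec hue] at he ⊢
      exact ⟨he, u, _, rfl, hu, fun hw => hI u hu _ hw he⟩
  rw [hbiUnion, card_biUnion]
  · exact sum_congr rfl fun u _ => G.card_incidenceFinset_eq_degree u
  intro u hu w hw huw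
  refine Finset.disjoint_left.2 fun e heu hew => hI u hu w hw ?_
  exact G.adj_of_mem_incidenceSet huw ((G.mem_incidenceFinset _ _).1 heu)
    ((G.mem_incidenceFinset _ _).1 hew)

lemma neighborFinset_deleteIncidenceSet_of_ne {u v : V} (h : u ≠ v) :
    (G.deleteIncidenceSet v).neighborFinset u = (G.neighborFinset u).erase v := by
  ext w
  simp only [mem_neighborFinset, mem_erase, deleteIncidenceSet_adj]
  tauto

lemma degree_deleteIncidenceSet_add_one {u v : V} (h : G.Adj v u) :
    (G.deleteIncidenceSet v).degree u + 1 = G.degree u := by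
  rw [← card_neighborFinset_eq_degree, neighborFinset_deleteIncidenceSet_of_ne h.ne',
    card_erase_add_one ((G.mem_neighborFinset _ _).2 h.symm), card_neighborFinset_eq_degree]

lemma degree_deleteIncidenceSet_of_not_adj {u v : V} (hu : u ≠ v) (h : ¬ G.Adj v u) :
    (G.deleteIncidenceSet v).degree u = G.degree u := by
  rw [← card_neighborFinset_eq_degree, neighborFinset_deleteIncidenceSet_of_ne hu,
    erase_eq_of_notMem fun hv => h ((G.mem_neighborFinset _ _).1 hv).symm,
    card_neighborFinset_eq_degree]

lemma indepPoly_eq_prod_of_forall_not_adj (h : ∀ u w, ¬ G.Adj u w) (μ : V → ℝ) :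
    G.indepPoly μ = ∏ u, (μ u + 1) := by
  rw [indepPoly, indepFinsets, filter_true_of_mem fun I _ u _ w _ => h u w, prod_add_one,
    powerset_univ]

lemma prod_eq_mul_prod_neighborFinset_mul_prod_compl (v : V) (f : V → ℝ) :
    ∏ w, f w = f v * (∏ w ∈ G.neighborFinset v, f w)
      * ∏ w ∈ (insert v (G.neighborFinset v))ᶜ, f w := by
  rw [← prod_mul_prod_compl (insert v (G.neighborFinset v)),
    prod_insert (G.notMem_neighborFinset_self v)]

lemma ne_and_not_adj_of_mem_compl {v w : V} (hw : w ∈ (insert v (G.neighborFinset v))ᶜ) :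
    w ≠ v ∧ ¬ G.Adj v w := by
  simpa only [mem_compl, mem_insert, mem_neighborFinset, not_or] using hw

lemma prod_degFactor_deleteIncidenceSet_update (v : V) (μ : V → ℝ) :
    ∏ w, degFactor ((G.deleteIncidenceSet v).degree w) (Function.update μ v 0 w)
      = (∏ u ∈ G.neighborFinset v, degFactor ((G.deleteIncidenceSet v).degree u) (μ u))
        * ∏ w ∈ (insert v (G.neighborFinset v))ᶜ, degFactor (G.degree w) (μ w) := by
  rw [prod_eq_mul_prod_neighborFinset_mul_prod_compl (G := G) v, Function.update_self,
    degFactor_zero_right, one_mul]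
  congr 1
  · refine prod_congr rfl fun u hu => ?_
    rw [Function.update_of_ne ((G.mem_neighborFinset v u).1 hu).ne']
  · refine prod_congr rfl fun w hw => ?_
    obtain ⟨hwv, hvw⟩ := ne_and_not_adj_of_mem_compl hw
    rw [Function.update_of_ne hwv, degree_deleteIncidenceSet_of_not_adj hwv hvw]

lemma prod_degFactor_deleteIncidenceSet_ite (v : V) (μ : V → ℝ) :
    ∏ w, degFactor ((G.deleteIncidenceSet v).degree w) (if w = v ∨ G.Adj v w then 0 else μ w)
      = ∏ w ∈ (insert v (G.neighborFinset v))ᶜ, degFactor (G.degree w) (μ w) := by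
  rw [prod_eq_mul_prod_neighborFinset_mul_prod_compl (G := G) v, if_pos (Or.inl rfl),
    degFactor_zero_right, one_mul, prod_eq_one fun u hu => by
      rw [if_pos (Or.inr ((G.mem_neighborFinset v u).1 hu)), degFactor_zero_right], one_mul]
  refine prod_congr rfl fun w hw => ?_
  obtain ⟨hwv, hvw⟩ := ne_and_not_adj_of_mem_compl hw
  rw [if_neg (not_or.2 ⟨hwv, hvw⟩), degree_deleteIncidenceSet_of_not_adj hwv hvw]

lemma prod_degFactor_eq_indepPoly_of_forall_not_adj (h : ∀ u w, ¬ G.Adj u w) (μ : V → ℝ) :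
    ∏ v, degFactor (G.degree v) (μ v) = G.indepPoly μ := by
  rw [indepPoly_eq_prod_of_forall_not_adj h]
  refine prod_congr rfl fun v _ => ?_
  rw [← card_neighborFinset_eq_degree, card_eq_zero.2 (eq_empty_of_forall_notMem fun w hw =>
    h v w ((G.mem_neighborFinset v w).1 hw)), degFactor_zero_left]

lemma prod_degFactor_le_indepPoly_of_deleteIncidenceSet {v : V}
    (hv : G.maxDegree = G.degree v) (hdeg : 0 < G.degree v) {μ : V → ℝ} (hμ : ∀ u, 0 ≤ μ u)
    (hA : ∏ w, degFactor ((G.deleteIncidenceSet v).degree w) (Function.update μ v 0 w)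
      ≤ (G.deleteIncidenceSet v).indepPoly (Function.update μ v 0))
    (hB : ∏ w, degFactor ((G.deleteIncidenceSet v).degree w)
        (if w = v ∨ G.Adj v w then 0 else μ w)
      ≤ (G.deleteIncidenceSet v).indepPoly (fun u => if u = v ∨ G.Adj v u then 0 else μ u)) :
    ∏ w, degFactor (G.degree w) (μ w) ≤ G.indepPoly μ := by
  set N := G.neighborFinset v
  set G' := G.deleteIncidenceSet v
  have hN : N.Nonempty := card_pos.1 ((G.card_neighborFinset_eq_degree v).symm ▸ hdeg)
  have hdegN : ∀ u ∈ N, G'.degree u + 1 = G.degree u := fun u hu =>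
    degree_deleteIncidenceSet_add_one ((G.mem_neighborFinset v u).1 hu)
  have hm : ∀ u ∈ N, G'.degree u < #N := fun u hu => by
    rw [card_neighborFinset_eq_degree, ← hv]
    exact Nat.lt_of_succ_le ((hdegN u hu).trans_le (G.degree_le_maxDegree u))
  have hC : 0 ≤ ∏ w ∈ (insert v N)ᶜ, degFactor (G.degree w) (μ w) :=
    prod_nonneg fun w _ => zero_le_one.trans (one_le_degFactor _ (hμ w))
  calc ∏ w, degFactor (G.degree w) (μ w)
      = degFactor #N (μ v) * (∏ u ∈ N, degFactor (G'.degree u + 1) (μ u))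
          * ∏ w ∈ (insert v N)ᶜ, degFactor (G.degree w) (μ w) := by
        rw [prod_eq_mul_prod_neighborFinset_mul_prod_compl (G := G) v,
          card_neighborFinset_eq_degree, prod_congr rfl fun u hu => by rw [← hdegN u hu]]
    _ ≤ (∏ u ∈ N, degFactor (G'.degree u) (μ u) + μ v)
          * ∏ w ∈ (insert v N)ᶜ, degFactor (G.degree w) (μ w) :=
        mul_le_mul_of_nonneg_right (degFactor_mul_prod_le hN hm (fun u _ => hμ u) (hμ v)) hC
    _ = ∏ w, degFactor (G'.degree w) (Function.update μ v 0 w) + μ v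
          * ∏ w, degFactor (G'.degree w) (if w = v ∨ G.Adj v w then 0 else μ w) := by
        rw [prod_degFactor_deleteIncidenceSet_update, prod_degFactor_deleteIncidenceSet_ite]
        ring
    _ ≤ G'.indepPoly (Function.update μ v 0)
          + μ v * G'.indepPoly (fun u => if u = v ∨ G.Adj v u then 0 else μ u) :=
        add_le_add hA (mul_le_mul_of_nonneg_left hB (hμ v))
    _ = G.indepPoly μ := (indepPoly_eq_add_mul v μ).symm

end Weighted

theorem prod_degFactor_le_indepPoly {V : Type*} [Fintype V] [DecidableEq V] (G : SimpleGraph V)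
    [DecidableRel G.Adj] (μ : V → ℝ) (hμ : ∀ u, 0 ≤ μ u) :
    ∏ v, degFactor (G.degree v) (μ v) ≤ G.indepPoly μ := by
  by_cases hE : ∀ u w, ¬ G.Adj u w
  · exact (prod_degFactor_eq_indepPoly_of_forall_not_adj hE μ).le
  push Not at hE
  obtain ⟨u₀, w₀, h₀⟩ := hE
  have : Nonempty V := ⟨u₀⟩
  obtain ⟨v, hv⟩ := G.exists_maximal_degree_vertex
  have hdeg : 0 < G.degree v :=
    hv ▸ ((G.degree_pos_iff_exists_adj u₀).2 ⟨w₀, h₀⟩).trans_le (G.degree_le_maxDegree u₀)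
  have hlt : #(G.deleteIncidenceSet v).edgeFinset < #G.edgeFinset := by
    rw [card_edgeFinset_deleteIncidenceSet]
    exact Nat.sub_lt (card_pos.2 ⟨s(u₀, w₀), G.mem_edgeFinset.2 h₀⟩) hdeg
  refine prod_degFactor_le_indepPoly_of_deleteIncidenceSet hv hdeg hμ
    (prod_degFactor_le_indepPoly _ _ fun u => ?_) (prod_degFactor_le_indepPoly _ _ fun u => ?_)
  · rcases eq_or_ne u v with rfl | h
    · simp
    · simpa [h] using hμ u
  · split_ifs <;> simp [hμ u]
termination_by #G.edgeFinset
decreasing_by all_goals exact hlt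

end SimpleGraph

theorem stmt_5 (n : ℕ) (G : SimpleGraph (Fin n)) [DecidableRel G.Adj]
    (lam alpha : ℝ) (hlam : 0 ≤ lam) (halpha : 0 ≤ alpha) :
    (∑ I ∈ Finset.univ.filter
        (fun I : Finset (Fin n) => ∀ u ∈ I, ∀ v ∈ I, ¬ G.Adj u v),
      lam ^ I.card *
        alpha ^ (G.edgeFinset.filter
          (fun e => ∃ u v, e = s(u, v) ∧ u ∈ I ∧ v ∉ I)).card)
    ≥ ∏ v, (((G.degree v : ℝ) + 1) * lam * alpha ^ (G.degree v) + 1) ^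
        ((1 : ℝ) / ((G.degree v : ℝ) + 1)) := by
  rw [ge_iff_le]
  calc ∏ v, (((G.degree v : ℝ) + 1) * lam * alpha ^ (G.degree v) + 1) ^
        ((1 : ℝ) / ((G.degree v : ℝ) + 1))
      = ∏ v, degFactor (G.degree v) (lam * alpha ^ G.degree v) := by
        simp only [degFactor, mul_assoc]
    _ ≤ G.indepPoly fun v => lam * alpha ^ G.degree v :=
        G.prod_degFactor_le_indepPoly _ fun v => by positivity
    -- the filters here and in `indepFinsets` differ only in their `Decidable` instances
    _ = _ := sum_congr (by unfold SimpleGraph.indepFinsets; congr) fun I hI => by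
        rw [prod_mul_distrib, prod_const, prod_pow_eq_pow_sum]
        congr 2
        convert (G.card_boundary_eq_sum_degree (mem_filter.1 hI).2).symm
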